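/- Let B = B_1 ⊗ B_2 where B_1, B_2 ∈ ℝ^{n×n} are symmetric positive definite, and for indices 1 ≤ i, j ≤ n let P_{ij} = P_{1,i} ⊗ P_{2,j}, where P_{1,i} and P_{2,j} are the lumped preconditioners constructed from B_1 and B_2 respectively. Then: (1) B and P_{ij} are symmetric positive definite and all generalized eigenvalues of the pencil (B, P_{ij}) lie in (0, 1]; (2) if i ≥ s and j ≥ q then λ_k(B, P_{sq}) ≤ λ_k(B, P_{ij}) for all k = 1, …, n²; (3) if B_1 and B_2 have all entries nonnegative, then the largest generalized eigenvalue of (B, P_{ij}) equals 1 for all i, j. -/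

import Mathlib

open Matrix

/-- The Euclidean norm of a vector. -/
noncomputable def enorm {m : Type*} [Fintype m] (v : m → ℝ) : ℝ :=
  Real.sqrt (∑ i, (v i) ^ 2)

/-- The `k`-th smallest generalized eigenvalue (counted with multiplicity) of the
symmetric pencil `(A, B)` with `B` positive definite, i.e. the `k`-th smallest root of
`det (A - λ B) = 0`.  It is defined as the `k`-th smallest eigenvalue of the Hermitian
matrix `√(B⁻¹) * A * √(B⁻¹)`, which is similar to `B⁻¹ * A`.  Junk value `0` is returned
if `A` is not symmetric or `B` is not positive definite. -/
noncomputable def genEig {m : Type*} [Fintype m] [DecidableEq m]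
    (A B : Matrix m m ℝ) (k : Fin (Fintype.card m)) : ℝ :=
  letI := Classical.propDecidable
  if h : A.IsHermitian ∧ B.PosDef then
    let hP := (h.2.inv).posSemidef
    let S : Matrix m m ℝ := (hP.isHermitian.eigenvectorUnitary : Matrix m m ℝ) *
      diagonal (fun i => Real.sqrt (hP.isHermitian.eigenvalues i)) *
      (star hP.isHermitian.eigenvectorUnitary : Matrix m m ℝ)
    have hS : S.IsHermitian := by
      show Sᴴ = S
      simp only [S, conjTranspose_mul, Matrix.mul_assoc, diagonal_conjTranspose,
        star_eq_conjTranspose, conjTranspose_conjTranspose, star_trivial]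
    have hC : (S * A * S).IsHermitian := by
      clear_value S
      show (S * A * S)ᴴ = S * A * S
      rw [conjTranspose_mul, conjTranspose_mul, hS.eq, h.1.eq, Matrix.mul_assoc]
    let f : Fin (Fintype.card m) → ℝ := hC.eigenvalues₀
    f (Tuple.sort f k)
  else 0

/-- The `k`-th smallest generalized eigenvalue of a pencil of `n × n` matrices,
indexed by `Fin n`.  `genEigFin A B 0` is the smallest one, `λ_1(A,B)`, and
`genEigFin A B (Fin.last _)` is the largest one, `λ_n(A,B)`. -/
noncomputable def genEigFin {n : ℕ} (A B : Matrix (Fin n) (Fin n) ℝ) (k : Fin n) : ℝ :=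
  genEig A B (Fin.cast (Fintype.card_fin n).symm k)

/-- The (row-sum) lumping operator: `lump B` is the diagonal matrix whose `i`-th
diagonal entry is the sum of the absolute values of the entries of the `i`-th row of `B`. -/
noncomputable def lump {m : Type*} [Fintype m] [DecidableEq m]
    (B : Matrix m m ℝ) : Matrix m m ℝ :=
  Matrix.diagonal fun i => ∑ j, |B i j|

/-- The banded part `D_i` of a matrix: it keeps all sub- and super-diagonals of index
smaller than `i` (i.e. the entries with `|j - k| < i`) and sets the rest to zero. -/
def diagBand {n : ℕ} (B : Matrix (Fin n) (Fin n) ℝ) (i : ℕ) : Matrix (Fin n) (Fin n) ℝ :=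
  Matrix.of fun j k => if |((j : ℕ) : ℤ) - ((k : ℕ) : ℤ)| < (i : ℤ) then B j k else 0

/-- The lumped preconditioner `P_i = D_i + 𝓛(R_i)` where `B = D_i + R_i`, `D_i` being the
banded part of `B` of bandwidth `i` and `R_i` the remainder. -/
noncomputable def precond {n : ℕ} (B : Matrix (Fin n) (Fin n) ℝ) (i : ℕ) :
    Matrix (Fin n) (Fin n) ℝ :=
  diagBand B i + lump (B - diagBand B i)

/-!
For symmetric `R`, `𝓛(R) - R` is positive semidefinite because `2 r a b ≤ |r| (a² + b²)`. Hence
`B ≤ P_i` in the Loewner order, and since `P_s - P_i = 𝓛(E) - E` for the band `E = D_i - D_s`, the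
preconditioners decrease as the bandwidth grows. The identity
`P₁ ⊗ P₂ - Q₁ ⊗ Q₂ = (P₁ - Q₁) ⊗ P₂ + Q₁ ⊗ (P₂ - Q₂)` carries both facts to Kronecker products.

The generalized eigenvalues of `(A, B)` are those of `B^{-1/2} A B^{-1/2}`, so they come with a basis
that is `B`-orthonormal and `A`-orthogonal. Testing on it, `A ≤ B` bounds them by `1`; and a nonzero
vector in the span of the upper eigenvectors of `(A, P)` and of the lower ones of `(A, Q)`
(Courant–Fischer) gives `λ_k(A, P) ≤ λ_k(A, Q)` when `Q ≤ P`. For entrywise nonnegative `B` one has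
`𝓛(R_i) 𝟙 = R_i 𝟙`, so `P 𝟙 = B 𝟙` and the eigenvalue `1` is attained.
-/

open Kronecker
open scoped ComplexOrder

section Lump
variable {m : Type*} [Fintype m] [DecidableEq m]

theorem posSemidef_lump_sub {R : Matrix m m ℝ} (hR : R.IsHermitian) :
    (lump R - R).PosSemidef := by
  refine .of_dotProduct_mulVec_nonneg ((isHermitian_diagonal _).sub hR) fun x => ?_
  have hquad : star x ⬝ᵥ ((lump R - R) *ᵥ x) =
      ∑ i, ∑ j, (|R i j| * x i ^ 2 - R i j * x i * x j) := by
    rw [sub_mulVec, dotProduct_sub, lump, star_trivial, funext (mulVec_diagonal _ x)]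
    simp only [dotProduct, mulVec, Finset.mul_sum, Finset.sum_mul, ← Finset.sum_sub_distrib]
    exact Finset.sum_congr rfl fun i _ => Finset.sum_congr rfl fun j _ => by ring
  -- Adding the transposed form, each term becomes `|r| (a² + b²) - 2 r a b ≥ 0`.
  have htranspose : ∑ i, ∑ j, (|R i j| * x i ^ 2 - R i j * x i * x j) =
      ∑ i, ∑ j, (|R i j| * x j ^ 2 - R i j * x i * x j) := by
    rw [Finset.sum_comm]
    exact Finset.sum_congr rfl fun i _ => Finset.sum_congr rfl fun j _ => by
      rw [← hR.apply i j, star_trivial]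
      ring
  have hsum : 0 ≤ ∑ i, ∑ j, ((|R i j| * x i ^ 2 - R i j * x i * x j) +
      (|R i j| * x j ^ 2 - R i j * x i * x j)) :=
    Finset.sum_nonneg fun i _ => Finset.sum_nonneg fun j _ => by
      nlinarith [abs_mul_abs_self (R i j), neg_abs_le (R i j), le_abs_self (R i j),
        sq_nonneg (x i - x j), sq_nonneg (x i + x j)]
  simp only [Finset.sum_add_distrib, ← htranspose] at hsum
  linarith

theorem lump_add_of_abs_add {X Y : Matrix m m ℝ}
    (h : ∀ i j, |(X + Y) i j| = |X i j| + |Y i j|) : lump (X + Y) = lump X + lump Y := by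
  simp only [lump, diagonal_add, h, Finset.sum_add_distrib]

theorem lump_mulVec_one {R : Matrix m m ℝ} (hR : ∀ i j, 0 ≤ R i j) : lump R *ᵥ 1 = R *ᵥ 1 := by
  ext i
  rw [lump, mulVec_diagonal]
  simp [mulVec, dotProduct, abs_of_nonneg (hR _ _)]

end Lump

section Band
variable {n : ℕ} {B : Matrix (Fin n) (Fin n) ℝ}

theorem isHermitian_diagBand (hB : B.IsHermitian) (i : ℕ) : (diagBand B i).IsHermitian := by
  refine IsHermitian.ext fun p q => ?_
  simp only [diagBand, of_apply, star_trivial, abs_sub_comm (q : ℤ)]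
  split_ifs
  exacts [hB.apply p q, rfl]

theorem precond_sub_self (B : Matrix (Fin n) (Fin n) ℝ) (i : ℕ) :
    precond B i - B = lump (B - diagBand B i) - (B - diagBand B i) := by
  unfold precond
  abel

theorem posSemidef_precond_sub_self (hB : B.IsHermitian) (i : ℕ) :
    (precond B i - B).PosSemidef :=
  precond_sub_self B i ▸ posSemidef_lump_sub (hB.sub (isHermitian_diagBand hB i))

theorem posDef_precond (hB : B.PosDef) (i : ℕ) : (precond B i).PosDef := by
  simpa using hB.add_posSemidef (posSemidef_precond_sub_self hB.isHermitian i)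

theorem posSemidef_precond_sub_precond (hB : B.IsHermitian) {s i : ℕ} (hsi : s ≤ i) :
    (precond B s - precond B i).PosSemidef := by
  have habs : ∀ p q, |((B - diagBand B i) + (diagBand B i - diagBand B s)) p q| =
      |(B - diagBand B i) p q| + |(diagBand B i - diagBand B s) p q| := by
    intro p q
    have : (s : ℤ) ≤ i := by exact_mod_cast hsi
    simp only [diagBand, Matrix.add_apply, Matrix.sub_apply, of_apply]
    split_ifs <;> first | omega | simp
  have hdiff : precond B s - precond B i =
      lump (diagBand B i - diagBand B s) - (diagBand B i - diagBand B s) := by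
    rw [precond, precond, ← sub_add_sub_cancel B (diagBand B i), lump_add_of_abs_add habs]
    abel
  rw [hdiff]
  exact posSemidef_lump_sub ((isHermitian_diagBand hB i).sub (isHermitian_diagBand hB s))

theorem precond_mulVec_one (hB : ∀ p q, 0 ≤ B p q) (i : ℕ) : precond B i *ᵥ 1 = B *ᵥ 1 := by
  rw [← sub_eq_zero, ← sub_mulVec, precond_sub_self, sub_mulVec, lump_mulVec_one, sub_self]
  intro p q
  simp only [diagBand, Matrix.sub_apply, of_apply]
  split_ifs <;> simp [hB]

end Band

section Kronecker
variable {m n : Type*}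

theorem kronecker_sub_kronecker {R : Type*} [CommRing R] (P₁ Q₁ : Matrix m m R)
    (P₂ Q₂ : Matrix n n R) :
    P₁ ⊗ₖ P₂ - Q₁ ⊗ₖ Q₂ = (P₁ - Q₁) ⊗ₖ P₂ + Q₁ ⊗ₖ (P₂ - Q₂) := by
  ext ⟨i, j⟩ ⟨k, l⟩
  simp only [Matrix.sub_apply, Matrix.add_apply, kronecker_apply]
  ring

theorem posSemidef_kronecker_sub_kronecker [Finite m] [Finite n] {𝕜 : Type*} [RCLike 𝕜]
    {P₁ Q₁ : Matrix m m 𝕜} {P₂ Q₂ : Matrix n n 𝕜} (h₁ : (P₁ - Q₁).PosSemidef)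
    (h₂ : (P₂ - Q₂).PosSemidef) (hP₂ : P₂.PosSemidef) (hQ₁ : Q₁.PosSemidef) :
    (P₁ ⊗ₖ P₂ - Q₁ ⊗ₖ Q₂).PosSemidef := by
  rw [kronecker_sub_kronecker]
  exact (h₁.kronecker hP₂).add (hQ₁.kronecker h₂)

theorem kronecker_mulVec_one [Fintype m] [Fintype n] {R : Type*} [CommSemiring R]
    (A : Matrix m m R) (B : Matrix n n R) :
    (A ⊗ₖ B) *ᵥ 1 = fun p => (A *ᵥ 1) p.1 * (B *ᵥ 1) p.2 := by
  ext ⟨i, j⟩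
  simp only [mulVec, dotProduct, Pi.one_apply, mul_one, kronecker_apply, Fintype.sum_prod_type,
    Finset.sum_mul_sum]

end Kronecker

section Span
variable {m : Type*} [Fintype m]

theorem dotProduct_mulVec_sum_smul {ι κ : Type*} [Fintype κ] [DecidableEq ι] {M : Matrix m m ℝ}
    {W : ι → m → ℝ} {r : ι → ℝ} (hW : ∀ j l, W j ⬝ᵥ (M *ᵥ W l) = if j = l then r l else 0)
    {e : κ → ι} (he : e.Injective) (c : κ → ℝ) :
    (∑ j, c j • W (e j)) ⬝ᵥ (M *ᵥ ∑ j, c j • W (e j)) = ∑ j, r (e j) * (c j * c j) := by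
  classical
  simp only [mulVec_sum, mulVec_smul, dotProduct_sum, sum_dotProduct, dotProduct_smul,
    smul_dotProduct, hW, he.eq_iff, smul_eq_mul, mul_ite, mul_zero, Finset.sum_ite_eq',
    Finset.mem_univ, if_true]
  exact Finset.sum_congr rfl fun j _ => by ring

theorem exists_sum_smul_eq_sum_smul {ι κ : Type*} [Fintype ι] [Fintype κ] (u : ι → m → ℝ)
    (v : κ → m → ℝ) (h : Fintype.card m < Fintype.card ι + Fintype.card κ) :
    ∃ (c : ι → ℝ) (d : κ → ℝ), (c ≠ 0 ∨ d ≠ 0) ∧ ∑ i, c i • u i = ∑ j, d j • v j := by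
  have hdep : ¬LinearIndependent ℝ (Sum.elim u v) := fun hli => by
    have := hli.fintype_card_le_finrank
    rw [Fintype.card_sum, Module.finrank_fintype_fun_eq_card] at this
    omega
  obtain ⟨g, hg, i, hi⟩ := Fintype.not_linearIndependent_iff.mp hdep
  refine ⟨g ∘ Sum.inl, -(g ∘ Sum.inr), ?_, ?_⟩
  · rcases i with i | i
    · exact Or.inl (Function.ne_iff.mpr ⟨i, hi⟩)
    · exact Or.inr (Function.ne_iff.mpr ⟨i, by simpa using hi⟩)
  · rw [Fintype.sum_sum_type] at hg
    simpa [neg_smul, Finset.sum_neg_distrib, eq_neg_iff_add_eq_zero] using hg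

end Span

section GenEig
variable {m : Type*} [Fintype m] [DecidableEq m] {A B : Matrix m m ℝ}

theorem isHermitian_cfc_mul_mul_cfc (f : ℝ → ℝ) (hA : A.IsHermitian) (C : Matrix m m ℝ) :
    (cfc f C * A * cfc f C).IsHermitian := by
  have hS : (cfc f C)ᴴ = cfc f C := cfc_predicate f C
  simpa only [hS] using isHermitian_conjTranspose_mul_mul (cfc f C) hA

theorem cfc_sqrt_mul_self (hB : B.PosSemidef) : cfc Real.sqrt B * cfc Real.sqrt B = B := by
  have hspec := (posSemidef_iff_isHermitian_and_spectrum_nonneg.mp hB).2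
  rw [← cfc_mul ..]
  exact (cfc_congr fun x hx => Real.mul_self_sqrt (hspec hx)).trans (cfc_id' ℝ B hB.isHermitian)

theorem cfc_sqrt_inv_mul_mul_self (hB : B.PosDef) :
    cfc Real.sqrt B⁻¹ * B * cfc Real.sqrt B⁻¹ = 1 := by
  refine mul_eq_one_comm.mp ?_
  rw [← Matrix.mul_assoc, cfc_sqrt_mul_self hB.inv.posSemidef,
    nonsing_inv_mul _ (B.isUnit_iff_isUnit_det.mp hB.isUnit)]

theorem genEig_eq_eigenvalues₀ (hA : A.IsHermitian) (hB : B.PosDef)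
    (hC : (cfc Real.sqrt B⁻¹ * A * cfc Real.sqrt B⁻¹).IsHermitian) (k : Fin (Fintype.card m)) :
    genEig A B k = hC.eigenvalues₀ (Tuple.sort hC.eigenvalues₀ k) := by
  -- `genEig` is built with classical decidability instances: switch to those first.
  obtain rfl : ‹DecidableEq m› = fun a b => Classical.propDecidable (a = b) :=
    Subsingleton.elim _ _
  classical
  have hS : (hB.inv.posSemidef.isHermitian.eigenvectorUnitary : Matrix m m ℝ) *
      diagonal (fun i => Real.sqrt (hB.inv.posSemidef.isHermitian.eigenvalues i)) *
      (star hB.inv.posSemidef.isHermitian.eigenvectorUnitary : Matrix m m ℝ) =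
        cfc Real.sqrt B⁻¹ := by
    rw [hB.inv.posSemidef.isHermitian.cfc_eq, IsHermitian.cfc, Unitary.conjStarAlgAut_apply]
    rfl
  have sorted_congr : ∀ {C C' : Matrix m m ℝ} (h : C.IsHermitian) (h' : C'.IsHermitian),
      C = C' → h.eigenvalues₀ (Tuple.sort h.eigenvalues₀ k) =
        h'.eigenvalues₀ (Tuple.sort h'.eigenvalues₀ k) := by
    rintro _ _ _ _ rfl
    rfl
  rw [genEig, dif_pos ⟨hA, hB⟩]
  exact sorted_congr _ hC (by rw [hS])

theorem monotone_genEig : Monotone (genEig A B) := by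
  unfold genEig
  split_ifs
  exacts [Tuple.monotone_sort _, monotone_const]

theorem range_genEig (hA : A.IsHermitian) (hB : B.PosDef) :
    Set.range (genEig A B) = spectrum ℝ (B⁻¹ * A) := by
  set S := cfc Real.sqrt B⁻¹
  have hC := isHermitian_cfc_mul_mul_cfc Real.sqrt hA B⁻¹
  let u : (Matrix m m ℝ)ˣ :=
    ⟨S, S * B, mul_eq_one_comm.mpr (cfc_sqrt_inv_mul_mul_self hB), cfc_sqrt_inv_mul_mul_self hB⟩
  have hconj : S * A * S = (↑u⁻¹ : Matrix m m ℝ) * (B⁻¹ * A) * (u : Matrix m m ℝ) := by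
    change S * A * S = S * B * (B⁻¹ * A) * S
    rw [Matrix.mul_assoc S B, ← Matrix.mul_assoc B,
      mul_nonsing_inv _ (B.isUnit_iff_isUnit_det.mp hB.isUnit), Matrix.one_mul]
  rw [← spectrum.units_conjugate' (u := u), ← hconj, hC.spectrum_real_eq_range_eigenvalues,
    show genEig A B = hC.eigenvalues₀ ∘ Tuple.sort hC.eigenvalues₀ from
      funext (genEig_eq_eigenvalues₀ hA hB hC), EquivLike.range_comp]
  exact (EquivLike.range_comp _ _).symm

theorem mem_range_genEig_of_mulVec_eq_smul (hA : A.IsHermitian) (hB : B.PosDef) {μ : ℝ}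
    {w : m → ℝ} (hw : w ≠ 0) (hAB : A *ᵥ w = μ • B *ᵥ w) : μ ∈ Set.range (genEig A B) := by
  rw [range_genEig hA hB, ← spectrum_toLin']
  refine (Module.End.hasEigenvalue_of_hasEigenvector
    ⟨Module.End.mem_eigenspace_iff.mpr ?_, hw⟩).mem_spectrum
  rw [toLin'_apply, ← mulVec_mulVec, hAB, mulVec_smul, mulVec_mulVec,
    nonsing_inv_mul _ (B.isUnit_iff_isUnit_det.mp hB.isUnit), one_mulVec]

theorem exists_genEig_basis (hA : A.IsHermitian) (hB : B.PosDef) :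
    ∃ W : Fin (Fintype.card m) → m → ℝ,
      (∀ j l, W j ⬝ᵥ (B *ᵥ W l) = if j = l then 1 else 0) ∧
      ∀ j l, W j ⬝ᵥ (A *ᵥ W l) = if j = l then genEig A B l else 0 := by
  set S := cfc Real.sqrt B⁻¹
  have hS : Sᴴ = S := cfc_predicate Real.sqrt B⁻¹
  have hC := isHermitian_cfc_mul_mul_cfc Real.sqrt hA B⁻¹
  set e : Fin (Fintype.card m) ≃ m := Fintype.equivOfCardEq (Fintype.card_fin _)
  set σ := Tuple.sort hC.eigenvalues₀
  set v : Fin (Fintype.card m) → m → ℝ := fun j => hC.eigenvectorBasis (e (σ j))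
  have hv : ∀ j l, v j ⬝ᵥ v l = if j = l then 1 else 0 := fun j l => by
    have := orthonormal_iff_ite.mp hC.eigenvectorBasis.orthonormal (e (σ l)) (e (σ j))
    simpa [EuclideanSpace.inner_eq_star_dotProduct, eq_comm] using this
  have sandwich : ∀ M j l, (S *ᵥ v j) ⬝ᵥ (M *ᵥ (S *ᵥ v l)) = v j ⬝ᵥ ((S * M * S) *ᵥ v l) := by
    intro M j l
    rw [← vecMul_transpose, ← dotProduct_mulVec, ← conjTranspose_eq_transpose_of_trivial, hS,
      mulVec_mulVec, mulVec_mulVec]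
  refine ⟨fun j => S *ᵥ v j, fun j l => ?_, fun j l => ?_⟩
  · rw [sandwich, cfc_sqrt_inv_mul_mul_self hB, one_mulVec, hv]
  · rw [sandwich, hC.mulVec_eigenvectorBasis, dotProduct_smul, hv,
      genEig_eq_eigenvalues₀ hA hB hC]
    split_ifs <;> simp [IsHermitian.eigenvalues, e, σ]

theorem genEig_nonneg (hA : A.PosSemidef) (hB : B.PosDef) (k : Fin (Fintype.card m)) :
    0 ≤ genEig A B k := by
  obtain ⟨W, -, hWA⟩ := exists_genEig_basis hA.isHermitian hB
  simpa [hWA] using hA.dotProduct_mulVec_nonneg (W k)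

theorem genEig_pos (hA : A.PosDef) (hB : B.PosDef) (k : Fin (Fintype.card m)) :
    0 < genEig A B k := by
  obtain ⟨W, hWB, hWA⟩ := exists_genEig_basis hA.isHermitian hB
  have hW : W k ≠ 0 := fun h => by simpa [h] using hWB k k
  simpa [hWA] using hA.dotProduct_mulVec_pos hW

theorem genEig_le_one (hA : A.IsHermitian) (hB : B.PosDef) (hBA : (B - A).PosSemidef)
    (k : Fin (Fintype.card m)) : genEig A B k ≤ 1 := by
  obtain ⟨W, hWB, hWA⟩ := exists_genEig_basis hA hB
  simpa [sub_mulVec, hWB, hWA] using hBA.dotProduct_mulVec_nonneg (W k)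

theorem genEig_le_genEig_of_posSemidef_sub {P Q : Matrix m m ℝ} (hA : A.PosSemidef)
    (hP : P.PosDef) (hQ : Q.PosDef) (hPQ : (P - Q).PosSemidef) (k : Fin (Fintype.card m)) :
    genEig A P k ≤ genEig A Q k := by
  obtain ⟨U, hUP, hUA⟩ := exists_genEig_basis hA.isHermitian hP
  obtain ⟨V, hVQ, hVA⟩ := exists_genEig_basis hA.isHermitian hQ
  -- Courant–Fischer: by dimension count, some `x` lies in the span of the `U j` with `k ≤ j`
  -- and in that of the `V j` with `j ≤ k`.
  obtain ⟨c, d, hcd, hx⟩ := exists_sum_smul_eq_sum_smul (fun j : Set.Ici k => U j)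
    (fun j : Set.Iic k => V j) (by simp; omega)
  set x := ∑ j : Set.Ici k, c j • U j
  have hxP := dotProduct_mulVec_sum_smul hUP Subtype.val_injective c
  have hxAU := dotProduct_mulVec_sum_smul hUA Subtype.val_injective c
  have hxQ := dotProduct_mulVec_sum_smul hVQ Subtype.val_injective d
  have hxAV := dotProduct_mulVec_sum_smul hVA Subtype.val_injective d
  rw [← hx] at hxQ hxAV
  simp only [one_mul] at hxP hxQ
  have lower : genEig A P k * (x ⬝ᵥ (P *ᵥ x)) ≤ x ⬝ᵥ (A *ᵥ x) := by
    rw [hxP, hxAU, Finset.mul_sum]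
    exact Finset.sum_le_sum fun j _ =>
      mul_le_mul_of_nonneg_right (monotone_genEig j.2) (mul_self_nonneg _)
  have upper : x ⬝ᵥ (A *ᵥ x) ≤ genEig A Q k * (x ⬝ᵥ (Q *ᵥ x)) := by
    rw [hxQ, hxAV, Finset.mul_sum]
    exact Finset.sum_le_sum fun j _ =>
      mul_le_mul_of_nonneg_right (monotone_genEig j.2) (mul_self_nonneg _)
  have hQP : x ⬝ᵥ (Q *ᵥ x) ≤ x ⬝ᵥ (P *ᵥ x) := by
    simpa [sub_mulVec] using hPQ.dotProduct_mulVec_nonneg x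
  have hpos : 0 < x ⬝ᵥ (P *ᵥ x) := by
    rcases hcd with hc | hd
    · rw [hxP]
      simpa [dotProduct] using dotProduct_star_self_pos_iff.mpr hc
    · refine hQP.trans_lt' ?_
      rw [hxQ]
      simpa [dotProduct] using dotProduct_star_self_pos_iff.mpr hd
  nlinarith [genEig_nonneg hA hQ k]

end GenEig

open Kronecker in
/-- Kronecker-product lumped preconditioners `P_{ij} = P_{1,i} ⊗ P_{2,j}`
for `B = B₁ ⊗ B₂`. -/
theorem stmt_19 {n : ℕ} (B₁ B₂ : Matrix (Fin (n + 1)) (Fin (n + 1)) ℝ)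
    (hB₁ : B₁.PosDef) (hB₂ : B₂.PosDef) :
    ((B₁ ⊗ₖ B₂).PosDef ∧
      ∀ i j : ℕ, 1 ≤ i → i ≤ n + 1 → 1 ≤ j → j ≤ n + 1 →
        (precond B₁ i ⊗ₖ precond B₂ j).PosDef ∧
        ∀ k : Fin (Fintype.card (Fin (n + 1) × Fin (n + 1))),
          0 < genEig (B₁ ⊗ₖ B₂) (precond B₁ i ⊗ₖ precond B₂ j) k ∧
          genEig (B₁ ⊗ₖ B₂) (precond B₁ i ⊗ₖ precond B₂ j) k ≤ 1) ∧
    (∀ i j s q : ℕ, 1 ≤ s → s ≤ i → i ≤ n + 1 → 1 ≤ q → q ≤ j → j ≤ n + 1 →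
      ∀ k : Fin (Fintype.card (Fin (n + 1) × Fin (n + 1))),
        genEig (B₁ ⊗ₖ B₂) (precond B₁ s ⊗ₖ precond B₂ q) k ≤
        genEig (B₁ ⊗ₖ B₂) (precond B₁ i ⊗ₖ precond B₂ j) k) ∧
    ((∀ p q, 0 ≤ B₁ p q) → (∀ p q, 0 ≤ B₂ p q) →
      ∀ i j : ℕ, 1 ≤ i → i ≤ n + 1 → 1 ≤ j → j ≤ n + 1 →
        IsGreatest
          (Set.range (genEig (B₁ ⊗ₖ B₂) (precond B₁ i ⊗ₖ precond B₂ j))) 1) := by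
  have hB := hB₁.kronecker hB₂
  have hP : ∀ i j, (precond B₁ i ⊗ₖ precond B₂ j).PosDef := fun i j =>
    (posDef_precond hB₁ i).kronecker (posDef_precond hB₂ j)
  have hBP : ∀ i j, (precond B₁ i ⊗ₖ precond B₂ j - B₁ ⊗ₖ B₂).PosSemidef := fun i j =>
    posSemidef_kronecker_sub_kronecker (posSemidef_precond_sub_self hB₁.isHermitian i)
      (posSemidef_precond_sub_self hB₂.isHermitian j) (posDef_precond hB₂ j).posSemidef
      hB₁.posSemidef
  have le_one : ∀ i j k, genEig (B₁ ⊗ₖ B₂) (precond B₁ i ⊗ₖ precond B₂ j) k ≤ 1 :=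
    fun i j => genEig_le_one hB.isHermitian (hP i j) (hBP i j)
  refine ⟨⟨hB, fun i j _ _ _ _ => ⟨hP i j, fun k => ⟨genEig_pos hB (hP i j) k, le_one i j k⟩⟩⟩,
    fun i j s q _ hsi _ _ hqj _ => ?_, fun h₁ h₂ i j _ _ _ _ => ⟨?_, ?_⟩⟩
  · refine genEig_le_genEig_of_posSemidef_sub hB.posSemidef (hP s q) (hP i j) ?_
    exact posSemidef_kronecker_sub_kronecker (posSemidef_precond_sub_precond hB₁.isHermitian hsi)
      (posSemidef_precond_sub_precond hB₂.isHermitian hqj) (posDef_precond hB₂ q).posSemidef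
      (posDef_precond hB₁ i).posSemidef
  · refine mem_range_genEig_of_mulVec_eq_smul hB.isHermitian (hP i j) one_ne_zero ?_
    rw [one_smul, kronecker_mulVec_one, kronecker_mulVec_one, precond_mulVec_one h₁,
      precond_mulVec_one h₂]
  · rintro _ ⟨k, rfl⟩
    exact le_one i j k
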